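/- arXiv:2207.14759 — 2 statements merged into one kernel-verified Lean document; each statement's English description precedes it below -/
import Mathlib

section
/- Define q_n(z) = p(cat(n,k); z) for fixed k ≥ 0, where cat(n,k) is the caterpillar with a spine path on n vertices and each spine vertex adjacent to exactly k extra leaves. Then q_n(z) = (1 + kz)·q_{n−1}(z) + z·q_{n−2}(z) for n ≥ 2, with q_0 = 1 and q_1 = 1 + kz. -/
open Polynomial

variable {V : Type*}

/-- `M` (a finite set of edges) is a matching of the graph `G`:
its members are edges of `G` and no two distinct members share an endpoint. -/
def IsGraphMatching (G : SimpleGraph V) (M : Finset (Sym2 V)) : Prop :=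
  (M : Set (Sym2 V)) ⊆ G.edgeSet ∧
    ∀ e ∈ M, ∀ f ∈ M, e ≠ f → ∀ x, x ∈ e → x ∉ f

/-- The set of vertices covered by the edge set `M` is exactly `S`. -/
def Covers (M : Finset (Sym2 V)) (S : Finset V) : Prop :=
  ∀ x, x ∈ S ↔ ∃ e ∈ M, x ∈ e

/-- `M` is a perfect matching of the induced subgraph `G[S]`. -/
def IsPerfectMatchingOn (G : SimpleGraph V) (M : Finset (Sym2 V)) (S : Finset V) : Prop :=
  IsGraphMatching G M ∧ Covers M S

/-- `S` is a perfectly matchable set of `G`. -/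
def IsPMS (G : SimpleGraph V) (S : Finset V) : Prop :=
  ∃ M, IsPerfectMatchingOn G M S

open Classical in
/-- The perfectly matchable set polynomial of the subgraph of `G` induced on the
ground vertex set `A`: the generating function `∑ p_{2k} z^k` where `p_{2k}` is the number
of perfectly matchable sets `S ⊆ A` with `|S| = 2k`. -/
noncomputable def pmPoly [Fintype V] (G : SimpleGraph V) (A : Finset V) : Polynomial ℤ :=
  ∑ S ∈ A.powerset, if IsPMS G S then X ^ (S.card / 2) else 0

/-- `G` has no cycle of even length. -/
def NoEvenCycle (G : SimpleGraph V) : Prop :=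
  ∀ (v : V) (c : G.Walk v v), c.IsCycle → ¬ Even c.length

/-- The caterpillar `cat(n, k)`: a spine path on `n` vertices (`Sum.inl i`), each spine
vertex `i` adjacent to `k` pendant leaves (`Sum.inr (i, j)`). -/
def caterpillar (n k : ℕ) : SimpleGraph (Fin n ⊕ Fin n × Fin k) :=
  SimpleGraph.fromRel (fun a b =>
    match a, b with
    | Sum.inl i, Sum.inl j => (i : ℕ) + 1 = (j : ℕ)
    | Sum.inl i, Sum.inr (j, _) => i = j
    | _, _ => False)

section Matching
variable [DecidableEq V] {G : SimpleGraph V} {M : Finset (Sym2 V)} {S : Finset V}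

lemma mem_of_mem_matching (h : IsPerfectMatchingOn G M S) {e : Sym2 V} (he : e ∈ M)
    {x : V} (hx : x ∈ e) : x ∈ S :=
  (h.2 x).2 ⟨e, he, hx⟩

lemma edge_unique (h : IsPerfectMatchingOn G M S) {e f : Sym2 V} (he : e ∈ M) (hf : f ∈ M)
    {x : V} (hxe : x ∈ e) (hxf : x ∈ f) : e = f := by
  by_contra hne
  exact h.1.2 e he f hf hne x hxe hxf

/-- Removing a matched edge. -/
lemma pm_remove (h : IsPerfectMatchingOn G M S) {a b : V} (he : s(a,b) ∈ M) :
    IsPerfectMatchingOn G (M.erase s(a,b)) ((S.erase b).erase a) := by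
  classical
  refine ⟨⟨fun e heM => h.1.1 (Finset.mem_of_mem_erase heM),
    fun e heM f hfM hne x => h.1.2 e (Finset.mem_of_mem_erase heM) f (Finset.mem_of_mem_erase hfM) hne x⟩,
    fun x => ?_⟩
  constructor
  · intro hx
    have hxa := (Finset.mem_erase.1 hx).1
    have hxb' := (Finset.mem_erase.1 (Finset.mem_erase.1 hx).2).1
    have hxS := (Finset.mem_erase.1 (Finset.mem_erase.1 hx).2).2
    obtain ⟨f, hfM, hxf⟩ := (h.2 x).1 hxS
    refine ⟨f, Finset.mem_erase.2 ⟨?_, hfM⟩, hxf⟩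
    rintro rfl
    rcases Sym2.mem_iff.1 hxf with rfl | rfl
    · exact hxa rfl
    · exact hxb' rfl
  · rintro ⟨f, hfM, hxf⟩
    obtain ⟨hfe, hfM'⟩ := Finset.mem_erase.1 hfM
    have hxS := mem_of_mem_matching h hfM' hxf
    refine Finset.mem_erase.2 ⟨?_, Finset.mem_erase.2 ⟨?_, hxS⟩⟩
    · rintro rfl
      exact h.1.2 f hfM' _ he hfe _ hxf (Sym2.mem_iff.2 (Or.inl rfl))
    · rintro rfl
      exact h.1.2 f hfM' _ he hfe _ hxf (Sym2.mem_iff.2 (Or.inr rfl))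

/-- Adding a new edge disjoint from `S`. -/
lemma pm_add (h : IsPerfectMatchingOn G M S) {a b : V} (hab : G.Adj a b)
    (ha : a ∉ S) (hb : b ∉ S) :
    IsPerfectMatchingOn G (insert s(a,b) M) (insert a (insert b S)) := by
  classical
  have hnotin : ∀ f ∈ M, ∀ x, x ∈ s(a,b) → x ∉ f := by
    intro f hf x hx hxf
    have := mem_of_mem_matching h hf hxf
    rcases Sym2.mem_iff.1 hx with rfl | rfl
    · exact ha this
    · exact hb this
  refine ⟨⟨fun e heM => ?_, fun e heM f hfM hne x hxe hxf => ?_⟩, fun x => ?_⟩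
  · rcases Finset.mem_insert.1 heM with rfl | heM
    · exact G.mem_edgeSet.2 hab
    · exact h.1.1 heM
  · rcases Finset.mem_insert.1 heM with rfl | heM <;> rcases Finset.mem_insert.1 hfM with rfl | hfM
    · exact hne rfl
    · exact hnotin f hfM x hxe hxf
    · exact hnotin e heM x hxf hxe
    · exact h.1.2 e heM f hfM hne x hxe hxf
  · constructor
    · intro hx
      rcases Finset.mem_insert.1 hx with rfl | hx
      · exact ⟨_, Finset.mem_insert_self _ _, Sym2.mem_iff.2 (Or.inl rfl)⟩
      rcases Finset.mem_insert.1 hx with rfl | hxS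
      · exact ⟨_, Finset.mem_insert_self _ _, Sym2.mem_iff.2 (Or.inr rfl)⟩
      · obtain ⟨f, hfM, hxf⟩ := (h.2 x).1 hxS
        exact ⟨f, Finset.mem_insert_of_mem hfM, hxf⟩
    · rintro ⟨f, hfM, hxf⟩
      rcases Finset.mem_insert.1 hfM with rfl | hfM
      · rcases Sym2.mem_iff.1 hxf with h1 | h1 <;> subst h1
        · exact Finset.mem_insert_self _ _
        · exact Finset.mem_insert_of_mem (Finset.mem_insert_self _ _)
      · exact Finset.mem_insert_of_mem (Finset.mem_insert_of_mem (mem_of_mem_matching h hfM hxf))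

/-- In a matching covering `S`, any `v ∈ S` has a partner. -/
lemma exists_partner (h : IsPerfectMatchingOn G M S) {v : V} (hv : v ∈ S) :
    ∃ u, G.Adj v u ∧ u ∈ S ∧ s(v,u) ∈ M := by
  obtain ⟨e, heM, hve⟩ := (h.2 v).1 hv
  revert heM hve
  induction e using Sym2.ind with
  | _ a b =>
    intro heM hve
    rcases Sym2.mem_iff.1 hve with rfl | rfl
    · exact ⟨b, G.mem_edgeSet.1 (h.1.1 heM), mem_of_mem_matching h heM (Sym2.mem_iff.2 (Or.inr rfl)), heM⟩
    · refine ⟨a, (G.mem_edgeSet.1 (h.1.1 heM)).symm, mem_of_mem_matching h heM (Sym2.mem_iff.2 (Or.inl rfl)), ?_⟩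
      rwa [Sym2.eq_swap]

end Matching

section Transfer
variable {W : Type*} {G : SimpleGraph V} {H : SimpleGraph W}

lemma isPMS_map (f : V ↪ W) (hadj : ∀ a b, G.Adj a b ↔ H.Adj (f a) (f b))
    (S : Finset V) : IsPMS H (S.map f) ↔ IsPMS G S := by
  classical
  constructor
  · rintro ⟨M, hM⟩
    -- every edge of M is in the image
    have hedge : ∀ e ∈ M, ∃ a b, a ∈ S ∧ b ∈ S ∧ e = s(f a, f b) := by
      intro e heM
      revert heM
      induction e using Sym2.ind with
      | _ x y =>
        intro heM
        have hx : x ∈ S.map f := mem_of_mem_matching hM heM (Sym2.mem_iff.2 (Or.inl rfl))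
        have hy : y ∈ S.map f := mem_of_mem_matching hM heM (Sym2.mem_iff.2 (Or.inr rfl))
        obtain ⟨a, haS, rfl⟩ := Finset.mem_map.1 hx
        obtain ⟨b, hbS, rfl⟩ := Finset.mem_map.1 hy
        exact ⟨a, b, haS, hbS, rfl⟩
    set g : Sym2 V → Sym2 W := Sym2.map f with hg
    have hginj : Function.Injective g := Sym2.map.injective f.injective
    refine ⟨M.preimage g (hginj.injOn), ⟨⟨?_, ?_⟩, ?_⟩⟩
    · intro e he
      rw [Finset.mem_coe, Finset.mem_preimage] at he
      revert he
      induction e using Sym2.ind with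
      | _ a b =>
        intro he
        have : H.Adj (f a) (f b) := H.mem_edgeSet.1 (hM.1.1 he)
        exact G.mem_edgeSet.2 ((hadj a b).2 this)
    · intro e he e' he' hne x hxe hxe'
      rw [Finset.mem_preimage] at he he'
      have : g e ≠ g e' := fun hh => hne (hginj hh)
      exact hM.1.2 (g e) he (g e') he' this (f x) (Sym2.mem_map.2 ⟨x, hxe, rfl⟩)
        (Sym2.mem_map.2 ⟨x, hxe', rfl⟩)
    · intro x
      constructor
      · intro hxS
        obtain ⟨e, heM, hxe⟩ := (hM.2 (f x)).1 (Finset.mem_map_of_mem f hxS)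
        obtain ⟨a, b, haS, hbS, rfl⟩ := hedge e heM
        refine ⟨s(a, b), Finset.mem_preimage.2 heM, ?_⟩
        rcases Sym2.mem_iff.1 hxe with hh | hh
        · exact Sym2.mem_iff.2 (Or.inl (f.injective hh))
        · exact Sym2.mem_iff.2 (Or.inr (f.injective hh))
      · rintro ⟨e, heM, hxe⟩
        rw [Finset.mem_preimage] at heM
        have : f x ∈ S.map f :=
          mem_of_mem_matching hM heM (Sym2.mem_map.2 ⟨x, hxe, rfl⟩)
        obtain ⟨a, haS, ha⟩ := Finset.mem_map.1 this
        rwa [f.injective ha] at haS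
  · rintro ⟨M, hM⟩
    refine ⟨M.map ⟨Sym2.map f, Sym2.map.injective f.injective⟩, ⟨⟨?_, ?_⟩, ?_⟩⟩
    · intro e he
      rw [Finset.mem_coe, Finset.mem_map] at he
      obtain ⟨e', he', rfl⟩ := he
      revert he'
      induction e' using Sym2.ind with
      | _ a b =>
        intro he'
        exact H.mem_edgeSet.2 ((hadj a b).1 (G.mem_edgeSet.1 (hM.1.1 he')))
    · intro e he e' he' hne x hxe hxe'
      obtain ⟨d, hd, rfl⟩ := Finset.mem_map.1 he
      obtain ⟨d', hd', rfl⟩ := Finset.mem_map.1 he'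
      have hdd : d ≠ d' := by rintro rfl; exact hne rfl
      obtain ⟨y, hy, rfl⟩ := Sym2.mem_map.1 hxe
      obtain ⟨y', hy', hyy⟩ := Sym2.mem_map.1 hxe'
      have : y = y' := f.injective hyy.symm
      subst this
      exact hM.1.2 d hd d' hd' hdd y hy hy'
    · intro x
      simp only [Finset.mem_map]
      constructor
      · rintro ⟨a, haS, rfl⟩
        obtain ⟨e, heM, hae⟩ := (hM.2 a).1 haS
        exact ⟨Sym2.map f e, ⟨e, heM, rfl⟩, Sym2.mem_map.2 ⟨a, hae, rfl⟩⟩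
      · rintro ⟨e, ⟨d, hd, rfl⟩, hxe⟩
        obtain ⟨y, hy, rfl⟩ := Sym2.mem_map.1 hxe
        exact ⟨y, mem_of_mem_matching hM hd hy, rfl⟩
end Transfer

section Cat
variable {n k : ℕ}

lemma cat_adj_leaf {i : Fin n} {j : Fin k} {x : Fin n ⊕ Fin n × Fin k} :
    (caterpillar n k).Adj (Sum.inr (i, j)) x ↔ x = Sum.inl i := by
  rw [caterpillar, SimpleGraph.fromRel_adj]
  rcases x with i' | ⟨i', j'⟩
  · simp [eq_comm]
  · constructor
    · rintro ⟨hne, h | h⟩ <;> simp_all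
    · intro h
      exact absurd h (by simp)

lemma cat_adj_last {x : Fin (n+1) ⊕ Fin (n+1) × Fin k} :
    (caterpillar (n+1) k).Adj (Sum.inl (Fin.last n)) x ↔
      (∃ i : Fin (n+1), x = Sum.inl i ∧ (i : ℕ) + 1 = n) ∨
        ∃ j, x = Sum.inr (Fin.last n, j) := by
  rw [caterpillar, SimpleGraph.fromRel_adj]
  rcases x with i' | ⟨i', j'⟩
  · have hlt := i'.isLt
    simp only [Sum.inl.injEq, exists_eq_left', reduceCtorEq, exists_false, or_false, ne_eq]
    simp [Fin.ext_iff]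
    omega
  · simp [Fin.ext_iff, eq_comm]

end Cat

section Emb
variable {n k : ℕ}

def embS (n k : ℕ) : (Fin n ⊕ Fin n × Fin k) ↪ (Fin (n+1) ⊕ Fin (n+1) × Fin k) :=
  Function.Embedding.sumMap Fin.castSuccEmb
    (Function.Embedding.prodMap Fin.castSuccEmb (Function.Embedding.refl _))

@[simp] lemma embS_inl (i : Fin n) : embS n k (Sum.inl i) = Sum.inl i.castSucc := rfl
@[simp] lemma embS_inr (i : Fin n) (j : Fin k) :
    embS n k (Sum.inr (i, j)) = Sum.inr (i.castSucc, j) := rfl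

lemma embS_adj (a b : Fin n ⊕ Fin n × Fin k) :
    (caterpillar n k).Adj a b ↔ (caterpillar (n+1) k).Adj (embS n k a) (embS n k b) := by
  rw [caterpillar, caterpillar, SimpleGraph.fromRel_adj, SimpleGraph.fromRel_adj]
  have hne : a ≠ b ↔ embS n k a ≠ embS n k b :=
    ⟨fun h h' => h ((embS n k).injective h'), fun h h' => h (congrArg _ h')⟩
  rw [hne]
  apply and_congr_right'
  apply or_congr <;>
  · rcases a with i | ⟨i, j⟩ <;> rcases b with i' | ⟨i', j'⟩ <;>
      simp [Fin.ext_iff]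

/-- The image of `embS` avoids the new spine vertex and its leaves. -/
lemma embS_ne_last (a : Fin n ⊕ Fin n × Fin k) :
    embS n k a ≠ Sum.inl (Fin.last n) ∧ ∀ j, embS n k a ≠ Sum.inr (Fin.last n, j) := by
  rcases a with i | ⟨i, j⟩
  · simp [Fin.ext_iff, (Fin.castSucc_lt_last i).ne]
  · refine ⟨by simp, fun j' => ?_⟩
    simp [Prod.ext_iff, Fin.ext_iff, (Fin.castSucc_lt_last i).ne]

/-- A finset avoiding the last spine vertex and its leaves comes from `embS`. -/
lemma exists_preimage (S : Finset (Fin (n+1) ⊕ Fin (n+1) × Fin k))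
    (h : ∀ x ∈ S, x ≠ Sum.inl (Fin.last n) ∧ ∀ j, x ≠ Sum.inr (Fin.last n, j)) :
    ∃ S' : Finset (Fin n ⊕ Fin n × Fin k), S = S'.map (embS n k) := by
  classical
  have hsub : S ⊆ Finset.univ.map (embS n k) := by
    intro x hx
    obtain ⟨h1, h2⟩ := h x hx
    rcases x with i | ⟨i, j⟩
    · have hne : i ≠ Fin.last n := fun hh => h1 (by rw [hh])
      obtain ⟨i', hi'⟩ := Fin.exists_castSucc_eq.2 hne
      exact Finset.mem_map.2 ⟨Sum.inl i', Finset.mem_univ _, by simp [hi']⟩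
    · have : i ≠ Fin.last n := by rintro rfl; exact h2 j rfl
      obtain ⟨i', hi'⟩ := Fin.exists_castSucc_eq.2 this
      exact Finset.mem_map.2 ⟨Sum.inr (i', j), Finset.mem_univ _, by simp [hi']⟩
  obtain ⟨u, _, hu⟩ := Finset.subset_map_iff.1 hsub
  exact ⟨u, hu⟩

end Emb

section Main
open Finset
variable {n k : ℕ}

open Classical in
lemma pmPoly_filter [Fintype V] (G : SimpleGraph V) :
    pmPoly G Finset.univ = ∑ S ∈ Finset.univ.filter (IsPMS G), X ^ (S.card / 2) := by
  rw [pmPoly, Finset.powerset_univ, Finset.sum_filter]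

lemma isPMS_empty (G : SimpleGraph V) : IsPMS G ∅ :=
  ⟨∅, ⟨fun e he => absurd he (by simp), fun e he => absurd he (by simp)⟩,
    fun x => by simp⟩

/-- The partner of a leaf is its spine vertex, and there is a matching edge between them. -/
lemma aux_leaf_edge {M : Finset (Sym2 (Fin n ⊕ Fin n × Fin k))} {S} {i : Fin n} {j : Fin k}
    (hM : IsPerfectMatchingOn (caterpillar n k) M S) (hj : Sum.inr (i, j) ∈ S) :
    s(Sum.inr (i, j), Sum.inl i) ∈ M := by
  classical
  obtain ⟨u, hadj, _, he⟩ := exists_partner hM hj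
  rw [cat_adj_leaf] at hadj
  subst hadj
  exact he

lemma aux_spine_of_leaf {S : Finset (Fin n ⊕ Fin n × Fin k)} {i : Fin n} {j : Fin k}
    (hS : IsPMS (caterpillar n k) S) (hj : Sum.inr (i, j) ∈ S) : Sum.inl i ∈ S := by
  classical
  obtain ⟨M, hM⟩ := hS
  exact mem_of_mem_matching hM (aux_leaf_edge hM hj) (Sym2.mem_iff.2 (Or.inr rfl))

lemma aux_leaf_unique {M : Finset (Sym2 (Fin n ⊕ Fin n × Fin k))} {S} {i : Fin n} {j j' : Fin k}
    (hM : IsPerfectMatchingOn (caterpillar n k) M S) (hj : Sum.inr (i, j) ∈ S)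
    (hj' : Sum.inr (i, j') ∈ S) : j = j' := by
  classical
  have e1 := aux_leaf_edge hM hj
  have e2 := aux_leaf_edge hM hj'
  have heq := edge_unique hM e1 e2 (x := Sum.inl i)
    (Sym2.mem_iff.2 (Or.inr rfl)) (Sym2.mem_iff.2 (Or.inr rfl))
  rcases Sym2.eq_iff.1 heq with ⟨h1, _⟩ | ⟨h1, _⟩
  · exact (Prod.ext_iff.1 (Sum.inr_injective h1)).2
  · exact absurd h1 (by simp)

lemma pmPoly_zero : pmPoly (caterpillar 0 k) Finset.univ = 1 := by
  classical
  have : (Finset.univ : Finset (Fin 0 ⊕ Fin 0 × Fin k)) = ∅ := by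
    ext x
    rcases x with i | ⟨i, j⟩ <;> exact absurd i.isLt (by omega)
  rw [pmPoly, this]
  simp [isPMS_empty]

open Classical in
lemma sumA :
    ∑ S ∈ (Finset.univ.filter (IsPMS (caterpillar (n+1) k))).filter
        (fun S => Sum.inl (Fin.last n) ∉ S), X ^ (S.card / 2)
      = pmPoly (caterpillar n k) Finset.univ := by
  classical
  rw [pmPoly_filter, filter_filter]
  have himg : Finset.univ.filter
        (fun S => IsPMS (caterpillar (n+1) k) S ∧ Sum.inl (Fin.last n) ∉ S)
      = (Finset.univ.filter (IsPMS (caterpillar n k))).image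
          (fun S => S.map (embS n k)) := by
    ext S
    simp only [mem_filter, mem_image, mem_univ, true_and]
    constructor
    · rintro ⟨hpms, hv⟩
      have hexc : ∀ x ∈ S, x ≠ Sum.inl (Fin.last n) ∧ ∀ j, x ≠ Sum.inr (Fin.last n, j) := by
        intro x hx
        constructor
        · rintro rfl; exact hv hx
        · rintro j rfl
          exact hv (aux_spine_of_leaf hpms hx)
      obtain ⟨S', rfl⟩ := exists_preimage S hexc
      exact ⟨S', (isPMS_map _ embS_adj S').1 hpms, rfl⟩
    · rintro ⟨S', hS', rfl⟩
      refine ⟨(isPMS_map _ embS_adj S').2 hS', fun hmem => ?_⟩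
      obtain ⟨a, _, ha⟩ := Finset.mem_map.1 hmem
      exact (embS_ne_last a).1 ha
  rw [himg, Finset.sum_image (fun x _ y _ h => Finset.map_injective _ h)]
  exact Finset.sum_congr rfl fun S _ => by rw [Finset.card_map]

open Classical in
lemma sumB :
    ∑ S ∈ (Finset.univ.filter (IsPMS (caterpillar (n+1) k))).filter
        (fun S => Sum.inl (Fin.last n) ∈ S ∧ ∃ j, Sum.inr (Fin.last n, j) ∈ S),
      X ^ (S.card / 2)
      = (k : Polynomial ℤ) * (X * pmPoly (caterpillar n k) Finset.univ) := by
  classical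
  rw [pmPoly_filter, filter_filter]
  set v : Fin (n+1) ⊕ Fin (n+1) × Fin k := Sum.inl (Fin.last n) with hv_def
  set g : Fin k × Finset (Fin n ⊕ Fin n × Fin k) → Finset (Fin (n+1) ⊕ Fin (n+1) × Fin k) :=
    fun p => insert v (insert (Sum.inr (Fin.last n, p.1)) (p.2.map (embS n k))) with hg_def
  have hvleaf : ∀ j : Fin k, v ≠ Sum.inr (Fin.last n, j) := by simp [hv_def]
  have hvmap : ∀ S' : Finset (Fin n ⊕ Fin n × Fin k), v ∉ S'.map (embS n k) := by
    intro S' hmem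
    obtain ⟨a, _, ha⟩ := Finset.mem_map.1 hmem
    exact (embS_ne_last a).1 ha
  have hlmap : ∀ (j : Fin k) (S' : Finset (Fin n ⊕ Fin n × Fin k)),
      Sum.inr (Fin.last n, j) ∉ S'.map (embS n k) := by
    intro j S' hmem
    obtain ⟨a, _, ha⟩ := Finset.mem_map.1 hmem
    exact (embS_ne_last a).2 j ha
  have hvnotin : ∀ (j : Fin k) (S' : Finset (Fin n ⊕ Fin n × Fin k)),
      v ∉ insert (Sum.inr (Fin.last n, j)) (S'.map (embS n k)) := by
    intro j S' h
    rcases Finset.mem_insert.1 h with h | h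
    · exact hvleaf j h
    · exact hvmap S' h
  have hgcard : ∀ p : Fin k × Finset (Fin n ⊕ Fin n × Fin k),
      (g p).card = p.2.card + 2 := by
    rintro ⟨j, S'⟩
    show (insert v (insert (Sum.inr (Fin.last n, j)) (S'.map (embS n k)))).card = S'.card + 2
    rw [Finset.card_insert_of_notMem (hvnotin j S'),
      Finset.card_insert_of_notMem (hlmap j S'), Finset.card_map]
  have himg : Finset.univ.filter
        (fun S => IsPMS (caterpillar (n+1) k) S ∧ v ∈ S ∧ ∃ j, Sum.inr (Fin.last n, j) ∈ S)
      = ((Finset.univ : Finset (Fin k)) ×ˢ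
          (Finset.univ.filter (IsPMS (caterpillar n k)))).image g := by
    ext S
    simp only [mem_filter, mem_image, mem_univ, true_and, Finset.mem_product]
    constructor
    · rintro ⟨hpms, hvS, j, hj⟩
      obtain ⟨M, hM⟩ := hpms
      have hedge := aux_leaf_edge hM hj
      have hS0 : IsPMS (caterpillar (n+1) k) ((S.erase v).erase (Sum.inr (Fin.last n, j))) :=
        ⟨_, pm_remove hM hedge⟩
      have hexc : ∀ x ∈ (S.erase v).erase (Sum.inr (Fin.last n, j)),
          x ≠ Sum.inl (Fin.last n) ∧ ∀ j', x ≠ Sum.inr (Fin.last n, j') := by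
        intro x hx
        have hxl := (Finset.mem_erase.1 hx).1
        have hxv := (Finset.mem_erase.1 (Finset.mem_erase.1 hx).2).1
        have hxS := (Finset.mem_erase.1 (Finset.mem_erase.1 hx).2).2
        refine ⟨hxv, fun j' hx' => ?_⟩
        subst hx'
        exact hxl (by rw [aux_leaf_unique hM hj hxS])
      obtain ⟨S', hS'⟩ := exists_preimage _ hexc
      refine ⟨(j, S'), (isPMS_map _ embS_adj S').1 (hS' ▸ hS0), ?_⟩
      show insert v (insert (Sum.inr (Fin.last n, j)) (S'.map (embS n k))) = S
      rw [← hS',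
        Finset.insert_erase (Finset.mem_erase.2 ⟨fun h => hvleaf j h.symm, hj⟩),
        Finset.insert_erase hvS]
    · rintro ⟨⟨j, S'⟩, hS', rfl⟩
      have hup : IsPMS (caterpillar (n+1) k) (S'.map (embS n k)) :=
        (isPMS_map _ embS_adj S').2 hS'
      obtain ⟨M, hM⟩ := hup
      have hadj : (caterpillar (n+1) k).Adj v (Sum.inr (Fin.last n, j)) :=
        cat_adj_last.2 (Or.inr ⟨j, rfl⟩)
      exact ⟨⟨_, pm_add hM hadj (hvmap S') (hlmap j S')⟩,
        Finset.mem_insert_self _ _,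
        ⟨j, Finset.mem_insert_of_mem (Finset.mem_insert_self _ _)⟩⟩
  have hinj : ∀ p ∈ ((Finset.univ : Finset (Fin k)) ×ˢ
        (Finset.univ.filter (IsPMS (caterpillar n k)))),
      ∀ q ∈ ((Finset.univ : Finset (Fin k)) ×ˢ
        (Finset.univ.filter (IsPMS (caterpillar n k)))),
      g p = g q → p = q := by
    rintro ⟨j, S'⟩ - ⟨j', S''⟩ - hgeq
    have hgeq' : insert v (insert (Sum.inr (Fin.last n, j)) (S'.map (embS n k)))
        = insert v (insert (Sum.inr (Fin.last n, j')) (S''.map (embS n k))) := hgeq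
    have hjj : j = j' := by
      have hmem : Sum.inr (Fin.last n, j) ∈
          insert v (insert (Sum.inr (Fin.last n, j')) (S''.map (embS n k))) := by
        rw [← hgeq']
        exact Finset.mem_insert_of_mem (Finset.mem_insert_self _ _)
      rcases Finset.mem_insert.1 hmem with h | h
      · exact absurd h.symm (hvleaf j)
      rcases Finset.mem_insert.1 h with h | h
      · exact ((Prod.ext_iff.1 (Sum.inr_injective h)).2 : j = j')
      · exact absurd h (hlmap j S'')
    subst hjj
    have h1 : insert (Sum.inr (Fin.last n, j)) (S'.map (embS n k))
        = insert (Sum.inr (Fin.last n, j)) (S''.map (embS n k)) := by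
      have e1 : (insert v (insert (Sum.inr (Fin.last n, j)) (S'.map (embS n k)))).erase v
          = (insert v (insert (Sum.inr (Fin.last n, j)) (S''.map (embS n k)))).erase v := by
        rw [hgeq']
      rwa [Finset.erase_insert (hvnotin j S'), Finset.erase_insert (hvnotin j S'')] at e1
    have h2 : S'.map (embS n k) = S''.map (embS n k) := by
      have e2 : (insert (Sum.inr (Fin.last n, j)) (S'.map (embS n k))).erase
            (Sum.inr (Fin.last n, j))
          = (insert (Sum.inr (Fin.last n, j)) (S''.map (embS n k))).erase
            (Sum.inr (Fin.last n, j)) := by rw [h1]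
      rwa [Finset.erase_insert (hlmap j S'), Finset.erase_insert (hlmap j S'')] at e2
    rw [Finset.map_injective _ h2]
  rw [himg, Finset.sum_image hinj, Finset.sum_product]
  have hterm : ∀ (j : Fin k), ∀ S' ∈ Finset.univ.filter (IsPMS (caterpillar n k)),
      (X : Polynomial ℤ) ^ ((g (j, S')).card / 2) = X ^ (S'.card / 2) * X := by
    intro j S' _
    rw [hgcard (j, S')]
    have h2 : (S'.card + 2) / 2 = S'.card / 2 + 1 := by omega
    rw [h2, pow_succ]
  calc ∑ j : Fin k, ∑ S' ∈ Finset.univ.filter (IsPMS (caterpillar n k)),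
        (X : Polynomial ℤ) ^ ((g (j, S')).card / 2)
      = ∑ _j : Fin k, ∑ S' ∈ Finset.univ.filter (IsPMS (caterpillar n k)),
          (X : Polynomial ℤ) ^ (S'.card / 2) * X :=
        Finset.sum_congr rfl fun j _ => Finset.sum_congr rfl (hterm j)
    _ = (k : Polynomial ℤ) *
          (X * ∑ S' ∈ Finset.univ.filter (IsPMS (caterpillar n k)),
            (X : Polynomial ℤ) ^ (S'.card / 2)) := by
        rw [Finset.sum_const, Finset.card_univ, Fintype.card_fin, ← Finset.sum_mul,
          nsmul_eq_mul]
        push_cast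
        ring

lemma emb2_ne (a : Fin n ⊕ Fin n × Fin k) :
    ((embS n k).trans (embS (n+1) k)) a ≠ Sum.inl ((Fin.last n).castSucc) ∧
      ∀ j, ((embS n k).trans (embS (n+1) k)) a ≠ Sum.inr ((Fin.last n).castSucc, j) := by
  rcases a with i | ⟨i, j⟩
  · constructor
    · have := i.isLt
      simp [Function.Embedding.trans_apply, Fin.ext_iff]
      omega
    · intro j'
      simp [Function.Embedding.trans_apply]
  · constructor
    · simp [Function.Embedding.trans_apply]
    · intro j'
      have := i.isLt
      simp [Function.Embedding.trans_apply, Prod.ext_iff, Fin.ext_iff]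
      omega

lemma cat_adj_vw :
    (caterpillar (n+2) k).Adj (Sum.inl (Fin.last (n+1))) (Sum.inl ((Fin.last n).castSucc)) :=
  cat_adj_last.2 (Or.inl ⟨(Fin.last n).castSucc, rfl, by simp⟩)

open Classical in
lemma sumC :
    ∑ S ∈ (Finset.univ.filter (IsPMS (caterpillar (n+2) k))).filter
        (fun S => Sum.inl (Fin.last (n+1)) ∈ S ∧ ∀ j, Sum.inr (Fin.last (n+1), j) ∉ S),
      X ^ (S.card / 2)
      = X * pmPoly (caterpillar n k) Finset.univ := by
  classical
  rw [pmPoly_filter, filter_filter]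
  set e2 : (Fin n ⊕ Fin n × Fin k) ↪ (Fin (n+2) ⊕ Fin (n+2) × Fin k) :=
    (embS n k).trans (embS (n+1) k) with he2_def
  set v : Fin (n+2) ⊕ Fin (n+2) × Fin k := Sum.inl (Fin.last (n+1)) with hv_def
  set w : Fin (n+2) ⊕ Fin (n+2) × Fin k := Sum.inl ((Fin.last n).castSucc) with hw_def
  have hvw : v ≠ w := by
    simp only [hv_def, hw_def, ne_eq, Sum.inl.injEq, Fin.ext_iff, Fin.val_last,
      Fin.coe_castSucc]
    omega
  have hadj2 : ∀ a b, (caterpillar n k).Adj a b ↔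
      (caterpillar (n+2) k).Adj (e2 a) (e2 b) := fun a b =>
    (embS_adj a b).trans (embS_adj _ _)
  have hvmap : ∀ S' : Finset (Fin n ⊕ Fin n × Fin k), v ∉ S'.map e2 := by
    intro S' hmem
    obtain ⟨a, _, ha⟩ := Finset.mem_map.1 hmem
    exact (embS_ne_last (embS n k a)).1 ha
  have hwmap : ∀ S' : Finset (Fin n ⊕ Fin n × Fin k), w ∉ S'.map e2 := by
    intro S' hmem
    obtain ⟨a, _, ha⟩ := Finset.mem_map.1 hmem
    exact (emb2_ne a).1 ha
  have hlmap : ∀ (j : Fin k) (S' : Finset (Fin n ⊕ Fin n × Fin k)),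
      Sum.inr (Fin.last (n+1), j) ∉ S'.map e2 := by
    intro j S' hmem
    obtain ⟨a, _, ha⟩ := Finset.mem_map.1 hmem
    exact (embS_ne_last (embS n k a)).2 j ha
  have hvnotin : ∀ S' : Finset (Fin n ⊕ Fin n × Fin k), v ∉ insert w (S'.map e2) := by
    intro S' h
    rcases Finset.mem_insert.1 h with h | h
    · exact hvw h
    · exact hvmap S' h
  set g : Finset (Fin n ⊕ Fin n × Fin k) → Finset (Fin (n+2) ⊕ Fin (n+2) × Fin k) :=
    fun S' => insert v (insert w (S'.map e2)) with hg_def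
  have hgcard : ∀ S', (g S').card = S'.card + 2 := by
    intro S'
    show (insert v (insert w (S'.map e2))).card = S'.card + 2
    rw [Finset.card_insert_of_notMem (hvnotin S'),
      Finset.card_insert_of_notMem (hwmap S'), Finset.card_map]
  have himg : Finset.univ.filter
        (fun S => IsPMS (caterpillar (n+2) k) S ∧ v ∈ S ∧
          ∀ j, Sum.inr (Fin.last (n+1), j) ∉ S)
      = (Finset.univ.filter (IsPMS (caterpillar n k))).image g := by
    ext S
    simp only [mem_filter, mem_image, mem_univ, true_and]
    constructor
    · rintro ⟨hpms, hvS, hnl⟩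
      obtain ⟨M, hM⟩ := hpms
      obtain ⟨u, hadj, huS, hedge⟩ := exists_partner hM hvS
      have hu : u = w := by
        rcases cat_adj_last.1 hadj with ⟨i, rfl, hi⟩ | ⟨j, rfl⟩
        · rw [hw_def]
          congr 1
          exact Fin.ext (by simp [Fin.ext_iff] at hi ⊢; omega)
        · exact absurd huS (hnl j)
      subst hu
      have hwS : w ∈ S := huS
      have hS0 : IsPerfectMatchingOn (caterpillar (n+2) k) _ ((S.erase w).erase v) :=
        pm_remove hM hedge
      have hwS0 : w ∉ (S.erase w).erase v := fun h =>
        (Finset.mem_erase.1 (Finset.mem_erase.1 h).2).1 rfl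
      have hexc : ∀ x ∈ (S.erase w).erase v,
          x ≠ Sum.inl (Fin.last (n+1)) ∧ ∀ j, x ≠ Sum.inr (Fin.last (n+1), j) := by
        intro x hx
        refine ⟨(Finset.mem_erase.1 hx).1, fun j hx' => ?_⟩
        subst hx'
        exact hnl j (Finset.mem_erase.1 (Finset.mem_erase.1 hx).2).2
      obtain ⟨S1, hS1⟩ := exists_preimage _ hexc
      have hexc1 : ∀ x ∈ S1, x ≠ Sum.inl (Fin.last n) ∧ ∀ j, x ≠ Sum.inr (Fin.last n, j) := by
        intro x hx
        constructor
        · rintro rfl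
          exact hwS0 (hS1 ▸ Finset.mem_map_of_mem _ hx)
        · rintro j rfl
          have hyS0 : Sum.inr ((Fin.last n).castSucc, j) ∈ (S.erase w).erase v :=
            hS1 ▸ Finset.mem_map_of_mem _ hx
          have hyS : Sum.inr ((Fin.last n).castSucc, j) ∈ S :=
            (Finset.mem_erase.1 (Finset.mem_erase.1 hyS0).2).2
          have hyedge := aux_leaf_edge hM hyS
          have := edge_unique hM hyedge hedge (x := w)
            (Sym2.mem_iff.2 (Or.inr rfl)) (Sym2.mem_iff.2 (Or.inr rfl))
          rcases Sym2.eq_iff.1 this with ⟨h1, _⟩ | ⟨h1, h2⟩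
          · exact absurd h1 (by simp [hv_def])
          · exact absurd h2 hvw.symm
      obtain ⟨S2, hS2⟩ := exists_preimage _ hexc1
      refine ⟨S2, ?_, ?_⟩
      · exact (isPMS_map _ hadj2 S2).1 (by
          rw [he2_def, ← Finset.map_map, ← hS2, ← hS1]
          exact ⟨_, hS0⟩)
      · show insert v (insert w (S2.map e2)) = S
        rw [he2_def, ← Finset.map_map, ← hS2, ← hS1, Finset.erase_right_comm,
          Finset.insert_erase (Finset.mem_erase.2 ⟨hvw.symm ∘ Eq.symm ∘ Eq.symm, hwS⟩),
          Finset.insert_erase hvS]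
    · rintro ⟨S2, hS2, rfl⟩
      have hup : IsPMS (caterpillar (n+2) k) (S2.map e2) := (isPMS_map _ hadj2 S2).2 hS2
      obtain ⟨M, hM⟩ := hup
      refine ⟨⟨_, pm_add hM cat_adj_vw (hvmap S2) (hwmap S2)⟩,
        Finset.mem_insert_self _ _, fun j h => ?_⟩
      rcases Finset.mem_insert.1 h with h | h
      · exact (by simp [hv_def] : v ≠ Sum.inr (Fin.last (n+1), j)) h.symm
      rcases Finset.mem_insert.1 h with h | h
      · exact (by simp [hw_def] : w ≠ Sum.inr (Fin.last (n+1), j)) h.symm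
      · exact hlmap j S2 h
  have hinj : ∀ p ∈ Finset.univ.filter (IsPMS (caterpillar n k)),
      ∀ q ∈ Finset.univ.filter (IsPMS (caterpillar n k)), g p = g q → p = q := by
    rintro S' - S'' - hgeq
    have hgeq' : insert v (insert w (S'.map e2)) = insert v (insert w (S''.map e2)) := hgeq
    have h1 : insert w (S'.map e2) = insert w (S''.map e2) := by
      have e1 : (insert v (insert w (S'.map e2))).erase v
          = (insert v (insert w (S''.map e2))).erase v := by rw [hgeq']
      rwa [Finset.erase_insert (hvnotin S'), Finset.erase_insert (hvnotin S'')] at e1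
    have h2 : S'.map e2 = S''.map e2 := by
      have e1 : (insert w (S'.map e2)).erase w = (insert w (S''.map e2)).erase w := by
        rw [h1]
      rwa [Finset.erase_insert (hwmap S'), Finset.erase_insert (hwmap S'')] at e1
    exact Finset.map_injective _ h2
  rw [himg, Finset.sum_image hinj]
  have hterm : ∀ S' ∈ Finset.univ.filter (IsPMS (caterpillar n k)),
      (X : Polynomial ℤ) ^ ((g S').card / 2) = X ^ (S'.card / 2) * X := by
    intro S' _
    rw [hgcard S']
    have h2 : (S'.card + 2) / 2 = S'.card / 2 + 1 := by omega
    rw [h2, pow_succ]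
  rw [Finset.sum_congr rfl hterm, ← Finset.sum_mul]
  ring

open Classical in
lemma sumC1 :
    (Finset.univ.filter (IsPMS (caterpillar (0+1) k))).filter
        (fun S => Sum.inl (Fin.last 0) ∈ S ∧ ∀ j, Sum.inr (Fin.last 0, j) ∉ S) = ∅ := by
  classical
  rw [Finset.eq_empty_iff_forall_notMem]
  intro S hS
  rw [Finset.filter_filter] at hS
  obtain ⟨-, hpms, hvS, hnl⟩ := Finset.mem_filter.1 hS
  obtain ⟨M, hM⟩ := hpms
  obtain ⟨u, hadj, huS, -⟩ := exists_partner hM hvS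
  rcases cat_adj_last.1 hadj with ⟨i, rfl, hi⟩ | ⟨j, rfl⟩
  · omega
  · exact hnl j huS

open Classical in
lemma keyRec :
    pmPoly (caterpillar (n+1) k) Finset.univ
      = pmPoly (caterpillar n k) Finset.univ
        + (k : Polynomial ℤ) * (X * pmPoly (caterpillar n k) Finset.univ)
        + ∑ S ∈ (Finset.univ.filter (IsPMS (caterpillar (n+1) k))).filter
            (fun S => Sum.inl (Fin.last n) ∈ S ∧ ∀ j, Sum.inr (Fin.last n, j) ∉ S),
          X ^ (S.card / 2) := by
  classical
  rw [pmPoly_filter (caterpillar (n+1) k)]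
  rw [← Finset.sum_filter_add_sum_filter_not
    (Finset.univ.filter (IsPMS (caterpillar (n+1) k)))
    (fun S => Sum.inl (Fin.last n) ∈ S) (fun S => X ^ (S.card / 2)),
    ← Finset.sum_filter_add_sum_filter_not
    ((Finset.univ.filter (IsPMS (caterpillar (n+1) k))).filter
      (fun S => Sum.inl (Fin.last n) ∈ S))
    (fun S => ∃ j, Sum.inr (Fin.last n, j) ∈ S) (fun S => X ^ (S.card / 2))]
  have hBC : ∀ (p : Finset (Fin (n+1) ⊕ Fin (n+1) × Fin k) → Prop)
      [DecidablePred p],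
      ((Finset.univ.filter (IsPMS (caterpillar (n+1) k))).filter
        (fun S => Sum.inl (Fin.last n) ∈ S)).filter p
      = (Finset.univ.filter (IsPMS (caterpillar (n+1) k))).filter
        (fun S => Sum.inl (Fin.last n) ∈ S ∧ p S) := by
    intro p _
    rw [Finset.filter_filter]
  rw [hBC, hBC]
  have hC : (Finset.univ.filter (IsPMS (caterpillar (n+1) k))).filter
        (fun S => Sum.inl (Fin.last n) ∈ S ∧ ¬ ∃ j, Sum.inr (Fin.last n, j) ∈ S)
      = (Finset.univ.filter (IsPMS (caterpillar (n+1) k))).filter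
        (fun S => Sum.inl (Fin.last n) ∈ S ∧ ∀ j, Sum.inr (Fin.last n, j) ∉ S) := by
    apply Finset.filter_congr
    intro S _
    rw [not_exists]
  rw [hC, sumB, sumA]
  ring


/-- writing `q_n(z) = p(cat(n,k); z)`, we have `q₀ = 1`, `q₁ = 1 + kz` and
`q_n = (1 + kz)·q_{n−1} + z·q_{n−2}` for `n ≥ 2`. -/
theorem stmt14 (k : ℕ) :
    pmPoly (caterpillar 0 k) Finset.univ = 1 ∧
    pmPoly (caterpillar 1 k) Finset.univ = 1 + (k : Polynomial ℤ) * X ∧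
    ∀ n, 2 ≤ n →
      pmPoly (caterpillar n k) Finset.univ =
        (1 + (k : Polynomial ℤ) * X) * pmPoly (caterpillar (n - 1) k) Finset.univ +
          X * pmPoly (caterpillar (n - 2) k) Finset.univ := by
  classical
  refine ⟨pmPoly_zero, ?_, ?_⟩
  · have h := keyRec (n := 0) (k := k)
    rw [sumC1, Finset.sum_empty, pmPoly_zero] at h
    have h2 : pmPoly (caterpillar (0+1) k) Finset.univ = 1 + (k : Polynomial ℤ) * X := by
      rw [h]; ring
    exact h2
  · intro n hn
    obtain ⟨m, rfl⟩ : ∃ m, n = m + 2 := ⟨n - 2, by omega⟩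
    rw [show m + 2 - 1 = m + 1 from rfl, show m + 2 - 2 = m from rfl]
    have h := keyRec (n := m + 1) (k := k)
    have h' : pmPoly (caterpillar (m+2) k) Finset.univ
        = pmPoly (caterpillar (m+1) k) Finset.univ
          + (k : Polynomial ℤ) * (X * pmPoly (caterpillar (m+1) k) Finset.univ)
          + ∑ S ∈ (Finset.univ.filter (IsPMS (caterpillar (m+2) k))).filter
              (fun S => Sum.inl (Fin.last (m+1)) ∈ S ∧
                ∀ j, Sum.inr (Fin.last (m+1), j) ∉ S),
            X ^ (S.card / 2) := h
    rw [sumC] at h'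
    rw [h']
    ring
end Main
end

section
/- For fixed n ≥ 1, the total number of perfectly matchable sets of cat(n,k) is asymptotic to k^n as k → ∞; that is, p(cat(n,k); 1)/k^n → 1. -/
/-! A leaf of `cat(n, k)` can only be matched to its spine vertex, so a perfectly matchable set
contains, at each spine vertex, either nothing, the spine vertex alone, or the spine vertex
together with exactly one of its `k` leaves: at most `(k + 2)ⁿ` sets. Conversely, choosing one
leaf at every spine vertex gives `kⁿ` distinct perfectly matchable sets. Hence
`kⁿ ≤ p(cat(n,k); 1) ≤ (k + 2)ⁿ`, and both bounds are `kⁿ (1 + o(1))`. -/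

open Polynomial

variable {V : Type*}

open Finset

section PendantVertex

variable {G : SimpleGraph V} {M : Finset (Sym2 V)} {S : Finset V} {x x' y : V}

theorem IsPerfectMatchingOn.edge_mem_of_adj_iff (hM : IsPerfectMatchingOn G M S)
    (hx : ∀ b, G.Adj x b ↔ b = y) (hxS : x ∈ S) : s(x, y) ∈ M := by
  obtain ⟨e, heM, hxe⟩ := (hM.2 x).1 hxS
  obtain ⟨b, rfl⟩ := Sym2.mem_iff_exists.1 hxe
  have hb : b = y := (hx b).1 (hM.1.1 heM)
  rwa [← hb]

theorem IsPerfectMatchingOn.mem_of_adj_iff (hM : IsPerfectMatchingOn G M S)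
    (hx : ∀ b, G.Adj x b ↔ b = y) (hxS : x ∈ S) : y ∈ S :=
  (hM.2 y).2 ⟨_, hM.edge_mem_of_adj_iff hx hxS, Sym2.mem_mk_right x y⟩

theorem IsPerfectMatchingOn.eq_of_adj_iff (hM : IsPerfectMatchingOn G M S)
    (hx : ∀ b, G.Adj x b ↔ b = y) (hx' : ∀ b, G.Adj x' b ↔ b = y)
    (hxS : x ∈ S) (hx'S : x' ∈ S) : x = x' := by
  by_contra hne
  exact hM.1.2 _ (hM.edge_mem_of_adj_iff hx hxS) _ (hM.edge_mem_of_adj_iff hx' hx'S)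
    (by simp [hne, ((hx y).2 rfl).ne]) y (Sym2.mem_mk_right x y) (Sym2.mem_mk_right x' y)

end PendantVertex

open Classical in
theorem pmPoly_eval_one [Fintype V] (G : SimpleGraph V) (A : Finset V) :
    (pmPoly G A).eval 1 = (#{S ∈ A.powerset | IsPMS G S} : ℤ) := by
  simp only [pmPoly, eval_finsetSum, card_filter, Nat.cast_sum]
  refine sum_congr rfl fun S _ => ?_
  split_ifs <;> simp

theorem caterpillar_adj_inr {n k : ℕ} {i : Fin n} {j : Fin k} {b : Fin n ⊕ Fin n × Fin k} :
    (caterpillar n k).Adj (.inr (i, j)) b ↔ b = .inl i := by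
  cases b <;> simp [caterpillar, eq_comm]

/-- Encodes a vertex set of `cat(n, k)` by what it contains at each spine vertex `i`:
`none` if not `i` itself, `some none` if `i` but no leaf of `i`, `some (some j)` if `i` and
exactly its `j`-th leaf. -/
def caterpillarSet {n k : ℕ} (c : Fin n → Option (Option (Fin k))) :
    Finset (Fin n ⊕ Fin n × Fin k) :=
  {x | x.elim (fun i => (c i).isSome) fun (i, j) => c i = some (some j)}

section CaterpillarSet

variable {n k : ℕ} {c : Fin n → Option (Option (Fin k))}

@[simp]
theorem mem_caterpillarSet_inl {i : Fin n} : .inl i ∈ caterpillarSet c ↔ (c i).isSome := by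
  simp [caterpillarSet]

@[simp]
theorem mem_caterpillarSet_inr {i : Fin n} {j : Fin k} :
    .inr (i, j) ∈ caterpillarSet c ↔ c i = some (some j) := by
  simp [caterpillarSet]

theorem caterpillarSet_injective : Function.Injective (caterpillarSet (n := n) (k := k)) := by
  intro c c' h
  funext i
  have hinl : (c i).isSome = (c' i).isSome := by
    simpa using congrArg (Sum.inl i ∈ ·) h
  have hinr (j : Fin k) : c i = some (some j) ↔ c' i = some (some j) := by
    simpa using congrArg (Sum.inr (i, j) ∈ ·) h
  rcases hc : c i with _ | _ | j <;> rcases hc' : c' i with _ | _ | j' <;>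
    simp_all

end CaterpillarSet

section CaterpillarPMS

variable {n k : ℕ}

theorem IsPMS.exists_caterpillarSet_eq {S : Finset (Fin n ⊕ Fin n × Fin k)}
    (hS : IsPMS (caterpillar n k) S) : ∃ c, caterpillarSet c = S := by
  obtain ⟨M, hM⟩ := hS
  have hlocal (i : Fin n) : ∃ o : Option (Option (Fin k)),
      (.inl i ∈ S ↔ o.isSome) ∧ ∀ j, (.inr (i, j) ∈ S ↔ o = some (some j)) := by
    by_cases hleaf : ∃ j, .inr (i, j) ∈ S
    · obtain ⟨j, hj⟩ := hleaf
      refine ⟨some (some j), by simpa using hM.mem_of_adj_iff (fun _ => caterpillar_adj_inr) hj,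
        fun j' => ⟨fun hj' => ?_, by rintro ⟨⟩; exact hj⟩⟩
      have := hM.eq_of_adj_iff (fun _ => caterpillar_adj_inr) (fun _ => caterpillar_adj_inr) hj hj'
      simp_all
    · push Not at hleaf
      by_cases hi : .inl i ∈ S
      · exact ⟨some none, by simpa using hi, by simpa using hleaf⟩
      · exact ⟨none, by simpa using hi, by simpa using hleaf⟩
  choose c hc using hlocal
  refine ⟨c, ext fun x => ?_⟩
  rcases x with i | ⟨i, j⟩
  · simp [(hc i).1]
  · simp [(hc i).2 j]

theorem isPMS_caterpillarSet_leaves (f : Fin n → Fin k) :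
    IsPMS (caterpillar n k) (caterpillarSet fun i => some (some (f i))) := by
  refine ⟨univ.image fun i => s(.inl i, .inr (i, f i)), ⟨?_, ?_⟩, ?_⟩
  · intro e he
    obtain ⟨i, -, rfl⟩ := mem_image.1 he
    exact (caterpillar_adj_inr.2 rfl).symm
  · simp only [mem_image, mem_univ, true_and]
    rintro _ ⟨i, rfl⟩ _ ⟨i', rfl⟩ hne x hx
    have hii' : i ≠ i' := by rintro rfl; exact hne rfl
    aesop
  · rintro (i | ⟨i, j⟩) <;> simp [eq_comm]

end CaterpillarPMS

open Classical in
theorem card_isPMS_caterpillar_le (n k : ℕ) :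
    #{S ∈ (univ : Finset (Fin n ⊕ Fin n × Fin k)).powerset | IsPMS (caterpillar n k) S}
      ≤ (k + 2) ^ n :=
  calc #{S ∈ (univ : Finset (Fin n ⊕ Fin n × Fin k)).powerset | IsPMS (caterpillar n k) S}
      _ ≤ #(univ.image caterpillarSet) := card_le_card fun S hS => by
          simpa using (mem_filter.1 hS).2.exists_caterpillarSet_eq
      _ ≤ #(univ : Finset (Fin n → Option (Option (Fin k)))) := card_image_le
      _ = (k + 2) ^ n := by simp

open Classical in
theorem pow_le_card_isPMS_caterpillar (n k : ℕ) :
    k ^ n ≤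
      #{S ∈ (univ : Finset (Fin n ⊕ Fin n × Fin k)).powerset | IsPMS (caterpillar n k) S} :=
  calc k ^ n
      _ = #(univ : Finset (Fin n → Fin k)) := by simp
      _ ≤ _ := card_le_card_of_injOn (fun f => caterpillarSet fun i => some (some (f i)))
          (fun f _ => by simpa using isPMS_caterpillarSet_leaves f)
          fun f _ g _ h => funext fun i => by simpa using congrFun (caterpillarSet_injective h) i

open Filter Topology in
theorem tendsto_div_pow_of_pow_le_of_le_add_pow {f : ℕ → ℝ} (n : ℕ) (a : ℝ)
    (hlow : ∀ k : ℕ, (k : ℝ) ^ n ≤ f k) (hup : ∀ k : ℕ, f k ≤ ((k : ℝ) + a) ^ n) :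
    Tendsto (fun k => f k / (k : ℝ) ^ n) atTop (𝓝 1) := by
  have hratio : Tendsto (fun k : ℕ => (1 + a / (k : ℝ)) ^ n) atTop (𝓝 1) := by
    simpa using ((tendsto_const_nhds (x := a).div_atTop tendsto_natCast_atTop_atTop).const_add
      1).pow n
  refine tendsto_of_tendsto_of_tendsto_of_le_of_le' tendsto_const_nhds hratio ?_ ?_
  all_goals filter_upwards [eventually_gt_atTop 0] with k hk
  · rw [one_le_div (by positivity)]
    exact hlow k
  · rw [div_le_iff₀ (by positivity), ← mul_pow, add_mul, div_mul_cancel₀ _ (by positivity),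
      one_mul]
    exact hup k

open Filter in
theorem stmt15_general (n : ℕ) :
    Tendsto (fun k : ℕ =>
        ((((pmPoly (caterpillar n k) Finset.univ).eval 1 : ℤ) : ℝ) / (k : ℝ) ^ n))
      atTop (nhds 1) := by
  classical
  refine tendsto_div_pow_of_pow_le_of_le_add_pow n 2 (fun k => ?_) fun k => ?_
  all_goals rw [pmPoly_eval_one, Int.cast_natCast]
  · exact_mod_cast pow_le_card_isPMS_caterpillar n k
  · exact_mod_cast card_isPMS_caterpillar_le n k

open Filter in
/-- for fixed `n ≥ 1`, `p(cat(n,k); 1) / kⁿ → 1` as `k → ∞`. -/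
theorem stmt15 (n : ℕ) (hn : 1 ≤ n) :
    Tendsto (fun k : ℕ =>
        ((((pmPoly (caterpillar n k) Finset.univ).eval 1 : ℤ) : ℝ) / (k : ℝ) ^ n))
      atTop (nhds 1) :=
  stmt15_general n
end
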